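/- For all integers n ≥ 1 and 0 ≤ r ≤ n−1: ∑_{j=0}^{r} (−1)^{r−j} C(n−1−j, r−j) · 2^j · C(n,j) = ∑_{i=0}^{r} C(n,i). -/

import Mathlib

/-!
By upper negation, `(-1)^(r-j) C(n-1-j, r-j)` is the generalized binomial coefficient
`C(r-n, r-j)`. Writing `2^j C(n,j) = ∑_i C(n,i) C(n-i, j-i)` and exchanging the sums, the
coefficient of `C(n,i)` is a Chu–Vandermonde convolution equal to `C((n-i) + (r-n), r-i) = 1`.
-/

open Finset

theorem Int.neg_one_pow_mul_choose_eq_ringChoose (a s : ℕ) :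
    (-1 : ℤ) ^ s * a.choose s = Ring.choose ((s : ℤ) - a - 1) s := by
  have h := Ring.choose_neg ((a : ℤ) + 1 - s) s
  rw [show -((a : ℤ) + 1 - s) = s - a - 1 by ring, show (a : ℤ) + 1 - s + s - 1 = a by ring,
    Ring.choose_natCast, Units.smul_def, Int.coe_negOnePow_natCast, smul_eq_mul] at h
  exact h.symm

theorem Int.sum_range_choose_mul_ringChoose (N m : ℕ) (z : ℤ) :
    ∑ k ∈ Finset.range (m + 1), (N.choose k : ℤ) * Ring.choose z (m - k) =
      Ring.choose (N + z) m := by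
  rw [Ring.add_choose_eq m (Commute.all _ _), Nat.sum_antidiagonal_eq_sum_range_succ
    (fun i j => Ring.choose (N : ℤ) i * Ring.choose z j)]
  simp only [Ring.choose_natCast]

theorem Int.sum_Ico_choose_mul_ringChoose_eq_one {n r i : ℕ} (hin : i ≤ n) (hir : i ≤ r) :
    ∑ j ∈ Ico i (r + 1), ((n - i).choose (j - i) : ℤ) * Ring.choose ((r : ℤ) - n) (r - j) = 1 := by
  rw [sum_Ico_eq_sum_range, show r + 1 - i = r - i + 1 by omega]
  simp only [Nat.add_sub_cancel_left, Nat.sub_add_eq]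
  rw [Int.sum_range_choose_mul_ringChoose,
    show ((n - i : ℕ) : ℤ) + (r - n) = (r - i : ℕ) by push_cast [hin, hir]; ring,
    Ring.choose_natCast, Nat.choose_self, Nat.cast_one]

theorem Nat.two_pow_mul_choose (n j : ℕ) :
    2 ^ j * n.choose j = ∑ i ∈ range (j + 1), n.choose i * (n - i).choose (j - i) := by
  rw [← Nat.sum_range_choose, sum_mul]
  refine sum_congr rfl fun i hi => ?_
  rw [mul_comm, Nat.choose_mul (Nat.lt_succ_iff.mp (mem_range.mp hi))]

/-- For all integers `n ≥ 1` and `0 ≤ r ≤ n−1`: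
`∑_{j=0}^{r} (−1)^{r−j} C(n−1−j, r−j) · 2^j · C(n,j) = ∑_{i=0}^{r} C(n,i)`. -/
theorem stmt16 (n r : ℕ) (hn : 1 ≤ n) (hr : r ≤ n - 1) :
    ∑ j ∈ Finset.range (r + 1),
        (-1 : ℤ) ^ (r - j) * ((n - 1 - j).choose (r - j)) * 2 ^ j * n.choose j
      = ∑ i ∈ Finset.range (r + 1), (n.choose i : ℤ) := by
  have upper_negation : ∀ j ∈ range (r + 1),
      (-1 : ℤ) ^ (r - j) * ((n - 1 - j).choose (r - j)) = Ring.choose ((r : ℤ) - n) (r - j) := by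
    intro j hj
    have := mem_range.mp hj
    rw [Int.neg_one_pow_mul_choose_eq_ringChoose]
    congr 1
    push_cast [show j ≤ r by omega, show 1 + j ≤ n by omega, Nat.sub_sub]
    ring
  calc ∑ j ∈ range (r + 1),
        (-1 : ℤ) ^ (r - j) * ((n - 1 - j).choose (r - j)) * 2 ^ j * n.choose j
      = ∑ j ∈ range (r + 1), ∑ i ∈ range (j + 1),
          (n.choose i : ℤ) * ((n - i).choose (j - i) * Ring.choose ((r : ℤ) - n) (r - j)) := by
        refine sum_congr rfl fun j hj => ?_
        rw [mul_assoc, upper_negation j hj, ← Nat.cast_ofNat, ← Nat.cast_pow, ← Nat.cast_mul,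
          Nat.two_pow_mul_choose, Nat.cast_sum, mul_sum]
        refine sum_congr rfl fun i _ => ?_
        push_cast
        ring
    _ = ∑ i ∈ range (r + 1), (n.choose i : ℤ) *
          ∑ j ∈ Ico i (r + 1), ((n - i).choose (j - i) * Ring.choose ((r : ℤ) - n) (r - j)) := by
        simp only [mul_sum]
        exact sum_comm' fun j i => by simp only [mem_range, mem_Ico]; omega
    _ = ∑ i ∈ range (r + 1), (n.choose i : ℤ) := by
        refine sum_congr rfl fun i hi => ?_
        have := mem_range.mp hi
        rw [Int.sum_Ico_choose_mul_ringChoose_eq_one (by omega) (by omega), mul_one]
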